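/- arXiv:1103.5886 — 4 statements merged into one kernel-verified Lean document; each statement's English description precedes it below -/
import Mathlib

section
/- Let k ≥ 1 and ℓ ≥ 0 be integers and let α be a real number with |α| < 1. Then (1/ℓ!)·(d/dξ)^ℓ [ (1+α+ξ)^{k+2ℓ} / (1+ξ)^k ] evaluated at ξ = 0 equals (1+α)^{k+ℓ} · Σ_{m=0}^{ℓ} C(2ℓ−m, ℓ)·C(k+m−1, m)·(−α)^m, where C(a,b) denotes the binomial coefficient. -/
open Finset

/-- The `n`-th prime number (`nthPrime 0 = 2`). -/
noncomputable def nthPrime (n : ℕ) : ℕ := Nat.nth Nat.Prime n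

/-- The prime counting function `π(x)` at a real argument: the number of primes `≤ x`. -/
noncomputable def primePi (x : ℝ) : ℕ := Nat.primeCounting ⌊x⌋₊

/-- `P_H(n) = ∏_{h ∈ H} (n + h)`. -/
def tuplePoly (H : Finset ℕ) (n : ℕ) : ℕ := ∏ h ∈ H, (n + h)

/-- `ν_p(H)`: the number of distinct residue classes modulo `p` occupied by `H`. -/
def nuP (p : ℕ) (H : Finset ℕ) : ℕ := (H.image (· % p)).card

/-- `H` is admissible: for every prime `p`, the elements of `H` miss a residue class mod `p`. -/
def Admissible (H : Finset ℕ) : Prop := ∀ p : ℕ, p.Prime → nuP p H < p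

/-- The singular series `𝔖(H) = ∏_p (1 - 1/p)^{-|H|} (1 - ν_p(H)/p)`. -/
noncomputable def singularSeries (H : Finset ℕ) : ℝ :=
  ∏' p : Nat.Primes, ((1 - 1/((p : ℕ) : ℝ)) ^ (-(H.card : ℤ)) * (1 - (nuP p H : ℝ)/((p : ℕ) : ℝ)))

/-- `Λ_R(n; H, ℓ) = (1/(|H|+ℓ)!) ∑_{d ∣ P_H(n), d ≤ R} μ(d) (log (R/d))^{|H|+ℓ}`. -/
noncomputable def LambdaR (R : ℝ) (n : ℕ) (H : Finset ℕ) (ℓ : ℕ) : ℝ :=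
  (1 / (H.card + ℓ).factorial : ℝ) *
    ∑ d ∈ (tuplePoly H n).divisors.filter (fun d : ℕ => (d : ℝ) ≤ R),
      (ArithmeticFunction.moebius d : ℝ) * (Real.log (R / d)) ^ (H.card + ℓ)

/-- `𝒫(x)`: the product of all primes `≤ x`. -/
noncomputable def primorialReal (x : ℝ) : ℕ :=
  ∏ p ∈ (Finset.range (⌊x⌋₊ + 1)).filter Nat.Prime, p

/-- `θ(n) = log n` if `n` is prime, and `0` otherwise. -/
noncomputable def theta (n : ℕ) : ℝ := if n.Prime then Real.log n else 0

/-- `∑_{p ≤ N, p prime, p ≡ a (mod q)} log p`. -/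
noncomputable def primeSumAP (N q a : ℕ) : ℝ :=
  ∑ p ∈ (Finset.range (N+1)).filter (fun p => p.Prime ∧ p % q = a % q), Real.log p

/-- The primes have level of distribution `ϑ`: for every `A > 0` and `ε > 0`,
`∑_{q ≤ N^{ϑ-ε}} max_{(a,q)=1} |∑_{p ≤ N, p ≡ a (q)} log p - N/φ(q)| ≪_{A,ε} N (log N)^{-A}`
(the max over `a` is expressed via an arbitrary coprime choice function `a : ℕ → ℕ`). -/
def HasLevelOfDistribution (ϑ : ℝ) : Prop :=
  ∀ A : ℝ, 0 < A → ∀ ε : ℝ, 0 < ε → ∃ C : ℝ, 0 < C ∧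
    ∀ N : ℕ, 2 ≤ N → ∀ a : ℕ → ℕ, (∀ q : ℕ, Nat.Coprime (a q) q) →
      ∑ q ∈ Finset.Icc 1 ⌊(N : ℝ) ^ (ϑ - ε)⌋₊,
        |primeSumAP N q (a q) - (N : ℝ) / (Nat.totient q)| ≤ C * N / (Real.log N) ^ A

/-- The number of `j` with `N < p_j ≤ 2N` and `p_{j+1} - p_j ≤ h`. -/
noncomputable def gapCount (N : ℕ) (h : ℝ) : ℕ :=
  ((Finset.range (2*N+1)).filter (fun j =>
    N < nthPrime j ∧ nthPrime j ≤ 2*N ∧ ((nthPrime (j+1) : ℝ) - nthPrime j) ≤ h)).card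

/-- The number of `j` with `N < p_j ≤ 2N` and `p_{j+2} - p_j ≤ h`. -/
noncomputable def gapCount2 (N : ℕ) (h : ℝ) : ℕ :=
  ((Finset.range (2*N+1)).filter (fun j =>
    N < nthPrime j ∧ nthPrime j ≤ 2*N ∧ ((nthPrime (j+2) : ℝ) - nthPrime j) ≤ h)).card

/-!
By the Leibniz rule, the `ℓ`-th Taylor coefficient at `0` is
`∑ₘ C(-k, m) C(k+2ℓ, ℓ-m) (1+α)^(k+ℓ+m)`, with the generalized binomial coefficient
`C(-k, m) = (-1)^m C(k+m-1, m)` coming from the derivatives of `(1+ξ)^(-k)`. Writing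
`(1+α)^m = ∑ₜ C(m, t) α^t` and using `C(-k, m) C(m, t) = C(-k, t) C(-k-t, m-t)`, the coefficient
of `α^t` becomes the Chu–Vandermonde sum `∑ᵢ C(-k-t, i) C(k+2ℓ, ℓ-t-i) = C(2ℓ-t, ℓ-t)`.
-/

theorem one_add_pow_eq_sum_range {R : Type*} [CommSemiring R] (x : R) {m n : ℕ} (hmn : m ≤ n) :
    (1 + x) ^ m = ∑ t ∈ range (n + 1), (m.choose t : R) * x ^ t := by
  rw [add_comm, add_pow]
  refine (sum_subset (range_subset_range.mpr (by omega : m + 1 ≤ n + 1)) fun t _ ht => ?_).trans ?_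
  · rw [Nat.choose_eq_zero_of_lt (by simpa using ht)]
    simp
  · exact sum_congr rfl fun t _ => by ring

namespace Ring

variable {R : Type*} [CommRing R] [BinomialRing R]

theorem prod_range_sub_eq_factorial_mul_choose (r : R) (n : ℕ) :
    ∏ i ∈ range n, (r - i) = n.factorial * choose r n := by
  rw [← nsmul_eq_mul, ← descPochhammer_eq_factorial_smul_choose,
    ← descPochhammer_eval_eq_prod_range, ← Polynomial.aeval_eq_smeval,
    ← descPochhammer_map (algebraMap ℤ R), Polynomial.eval_map_algebraMap]

attribute [local instance] BinomialRing.toIsAddTorsionFree in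
theorem choose_neg_natCast (k m : ℕ) :
    choose (-(k : R)) m = (-1) ^ m * ((k + m - 1).choose m : ℕ) := by
  apply nsmul_right_injective m.factorial_ne_zero
  have hfactor : ∏ i ∈ range m, (-(k : R) - i) = ∏ i ∈ range m, (-1) * ((k + i : ℕ) : R) :=
    prod_congr rfl fun i _ => by push_cast; ring
  simp only [nsmul_eq_mul]
  rw [← prod_range_sub_eq_factorial_mul_choose, hfactor, prod_mul_distrib, prod_const, card_range,
    ← Nat.cast_prod, ← Nat.ascFactorial_eq_prod_range, Nat.ascFactorial_eq_factorial_mul_choose',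
    Nat.cast_mul]
  ring

theorem sum_choose_mul_choose_mul_choose (r s : R) {n t : ℕ} (ht : t ≤ n) :
    ∑ m ∈ range (n + 1), (m.choose t : R) * choose r m * choose s (n - m)
      = choose r t * choose (r - t + s) (n - t) := by
  have hsplit : n + 1 = t + (n - t + 1) := by omega
  rw [hsplit, sum_range_add, sum_eq_zero fun m hm => by
      rw [Nat.choose_eq_zero_of_lt (mem_range.mp hm)]; simp, zero_add,
    add_choose_eq _ (Commute.all _ _), Nat.sum_antidiagonal_eq_sum_range_succ_mk, mul_sum]
  refine sum_congr rfl fun i _ => ?_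
  rw [← nsmul_eq_mul, choose_smul_choose r (Nat.le_add_right t i), Nat.add_sub_cancel_left,
    Nat.sub_add_eq, mul_assoc]

theorem sum_choose_mul_choose_mul_one_add_pow (r s x : R) (n : ℕ) :
    ∑ m ∈ range (n + 1), choose r m * choose s (n - m) * (1 + x) ^ m
      = ∑ t ∈ range (n + 1), choose r t * choose (r - t + s) (n - t) * x ^ t := by
  calc ∑ m ∈ range (n + 1), choose r m * choose s (n - m) * (1 + x) ^ m
      = ∑ m ∈ range (n + 1), ∑ t ∈ range (n + 1),
          (m.choose t : R) * choose r m * choose s (n - m) * x ^ t := by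
        refine sum_congr rfl fun m hm => ?_
        rw [one_add_pow_eq_sum_range x (Nat.lt_succ_iff.mp (mem_range.mp hm)), mul_sum]
        exact sum_congr rfl fun t _ => by ring
    _ = ∑ t ∈ range (n + 1), choose r t * choose (r - t + s) (n - t) * x ^ t := by
        rw [sum_comm]
        refine sum_congr rfl fun t ht => ?_
        rw [← sum_mul, sum_choose_mul_choose_mul_choose r s (Nat.lt_succ_iff.mp (mem_range.mp ht))]

end Ring

section TaylorCoefficients

variable {𝕜 : Type*} [NontriviallyNormedField 𝕜]

theorem iteratedDeriv_const_add_pow_zero (c : 𝕜) (N n : ℕ) :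
    iteratedDeriv n (fun ξ => (c + ξ) ^ N) 0 = n.factorial * N.choose n * c ^ (N - n) := by
  rw [congrFun (iteratedDeriv_comp_const_add n (· ^ N) c) 0, iteratedDeriv_pow, add_zero,
    Nat.descFactorial_eq_factorial_mul_choose, Nat.cast_mul]

variable [CharZero 𝕜]

theorem iteratedDeriv_inv_one_add_pow_zero (k n : ℕ) :
    iteratedDeriv n (fun ξ : 𝕜 => ((1 + ξ) ^ k)⁻¹) 0 = n.factorial * Ring.choose (-(k : 𝕜)) n := by
  have hzpow : (fun ξ : 𝕜 => ((1 + ξ) ^ k)⁻¹) = fun ξ => (1 + ξ) ^ (-(k : ℤ)) := by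
    simp [zpow_neg]
  rw [hzpow, congrFun (iteratedDeriv_comp_const_add n (· ^ (-(k : ℤ))) (1 : 𝕜)) 0,
    iteratedDeriv_eq_iterate, iter_deriv_zpow, add_zero, one_zpow, mul_one, Int.cast_neg,
    Int.cast_natCast, Ring.prod_range_sub_eq_factorial_mul_choose]

theorem iteratedDeriv_const_add_pow_div_one_add_pow_zero (c : 𝕜) (N k n : ℕ) :
    iteratedDeriv n (fun ξ => (c + ξ) ^ N / (1 + ξ) ^ k) 0
      = n.factorial * ∑ m ∈ range (n + 1),
          Ring.choose (-(k : 𝕜)) m * N.choose (n - m) * c ^ (N - (n - m)) := by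
  have hmul : (fun ξ => (c + ξ) ^ N / (1 + ξ) ^ k) = fun ξ => ((1 + ξ) ^ k)⁻¹ * (c + ξ) ^ N := by
    simp [div_eq_mul_inv, mul_comm]
  have hinv : ContDiffAt 𝕜 n (fun ξ : 𝕜 => ((1 + ξ) ^ k)⁻¹) 0 := by
    fun_prop (disch := simp)
  rw [hmul, iteratedDeriv_fun_mul hinv (by fun_prop), mul_sum]
  refine sum_congr rfl fun m hm => ?_
  rw [iteratedDeriv_inv_one_add_pow_zero, iteratedDeriv_const_add_pow_zero,
    ← Nat.choose_mul_factorial_mul_factorial (Nat.lt_succ_iff.mp (mem_range.mp hm))]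
  push_cast
  ring

end TaylorCoefficients

theorem derivative_identity_general (k ℓ : ℕ) (α : ℝ) :
    (1 / ℓ.factorial : ℝ) *
        iteratedDeriv ℓ (fun ξ : ℝ => (1 + α + ξ) ^ (k + 2*ℓ) / (1 + ξ) ^ k) 0
      = (1 + α) ^ (k + ℓ) *
          ∑ m ∈ Finset.range (ℓ + 1),
            (Nat.choose (2*ℓ - m) ℓ : ℝ) * (Nat.choose (k + m - 1) m : ℝ) * (-α) ^ m := by
  rw [iteratedDeriv_const_add_pow_div_one_add_pow_zero, one_div,
    inv_mul_cancel_left₀ (by positivity)]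
  have hfactor : ∀ m ∈ range (ℓ + 1),
      Ring.choose (-(k : ℝ)) m * ((k + 2*ℓ).choose (ℓ - m) : ℝ) * (1 + α) ^ (k + 2*ℓ - (ℓ - m))
        = (1 + α) ^ (k + ℓ) *
          (Ring.choose (-(k : ℝ)) m * Ring.choose ((k + 2*ℓ : ℕ) : ℝ) (ℓ - m) * (1 + α) ^ m) := by
    intro m hm
    rw [Ring.choose_natCast, show k + 2*ℓ - (ℓ - m) = (k + ℓ) + m by
      have := mem_range.mp hm; omega, pow_add]
    ring
  rw [sum_congr rfl hfactor, ← mul_sum, Ring.sum_choose_mul_choose_mul_one_add_pow]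
  congr 1
  refine sum_congr rfl fun t ht => ?_
  have ht : t ≤ ℓ := Nat.lt_succ_iff.mp (mem_range.mp ht)
  have hupper : -(k : ℝ) - t + ((k + 2*ℓ : ℕ) : ℝ) = ((2*ℓ - t : ℕ) : ℝ) := by
    push_cast [show t ≤ 2*ℓ by omega]
    ring
  rw [Ring.choose_neg_natCast, hupper, Ring.choose_natCast,
    Nat.choose_symm_of_eq_add (show 2*ℓ - t = (ℓ - t) + ℓ by omega), neg_pow]
  ring

/-- **(2.4) of GPY IV.** For integers `k ≥ 1`, `ℓ ≥ 0` and a real `α` with `|α| < 1`,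
`(1/ℓ!) (d/dξ)^ℓ [(1+α+ξ)^{k+2ℓ}/(1+ξ)^k]|_{ξ=0}
 = (1+α)^{k+ℓ} ∑_{m=0}^{ℓ} C(2ℓ-m, ℓ) C(k+m-1, m) (-α)^m`. -/
theorem derivative_identity (k ℓ : ℕ) (hk : 1 ≤ k) (α : ℝ) (hα : |α| < 1) :
    (1 / ℓ.factorial : ℝ) *
        iteratedDeriv ℓ (fun ξ : ℝ => (1 + α + ξ) ^ (k + 2*ℓ) / (1 + ξ) ^ k) 0
      = (1 + α) ^ (k + ℓ) *
          ∑ m ∈ Finset.range (ℓ + 1),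
            (Nat.choose (2*ℓ - m) ℓ : ℝ) * (Nat.choose (k + m - 1) m : ℝ) * (-α) ^ m :=
  derivative_identity_general k ℓ α
end

section
/- Let H ⊂ [1,h] be a k-element set of distinct integers, let R ≥ 2, δ ∈ (0,1), 0 ≤ ℓ < k, and let N < n ≤ 2N with h ≤ N. If (P_H(n), 𝒫(R^δ)) = 1 (i.e., every prime factor of P_H(n) exceeds R^δ), then |Λ_R(n;H,ℓ)| ≤ (2^{k·log(3N)/(δ·log R)} / (k+ℓ)!) · (log R)^{k+ℓ}. -/
open Finset

/-!
Only squarefree divisors contribute to `Λ_R`, each with weight at most `(log R)^{k+ℓ}`, so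
`|Λ_R| (k+ℓ)! ≤ 2^ω (log R)^{k+ℓ}` where `ω` is the number of prime factors of `P_H(n)`.
All of them exceed `R^δ` while `P_H(n) ≤ (3N)^k`, hence `ω δ log R ≤ k log (3N)`.
-/

open Finset Real
open scoped ArithmeticFunction.Moebius

theorem Nat.card_divisors_filter_squarefree {n : ℕ} (hn : n ≠ 0) :
    #{d ∈ n.divisors | Squarefree d} = 2 ^ #n.primeFactors := by
  rw [card_eq_sum_ones, Nat.sum_divisors_filter_squarefree hn, Nat.factors_eq]
  simp [Nat.toFinset_factors]

theorem Nat.card_primeFactors_le_log_div_log {n : ℕ} (hn : n ≠ 0) {y : ℝ} (hy : 1 < y)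
    (h : ∀ p ∈ n.primeFactors, y ≤ p) :
    (#n.primeFactors : ℝ) ≤ Real.log n / Real.log y := by
  have hpow : y ^ #n.primeFactors ≤ n :=
    calc y ^ #n.primeFactors = ∏ _p ∈ n.primeFactors, y := (prod_const y).symm
      _ ≤ ∏ p ∈ n.primeFactors, (p : ℝ) := prod_le_prod (fun _ _ => by linarith) h
      _ = ((∏ p ∈ n.primeFactors, p : ℕ) : ℝ) := by push_cast; rfl
      _ ≤ n := by
          exact_mod_cast Nat.le_of_dvd (Nat.pos_of_ne_zero hn) (Nat.prod_primeFactors_dvd n)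
  rw [le_div_iff₀ (Real.log_pos hy), ← Real.log_pow]
  exact Real.log_le_log (by positivity) hpow

theorem abs_sum_moebius_mul_le {D : Finset ℕ} {f : ℕ → ℝ} {B : ℝ}
    (hf : ∀ d ∈ D, Squarefree d → |f d| ≤ B) :
    |∑ d ∈ D, (μ d : ℝ) * f d| ≤ #{d ∈ D | Squarefree d} * B := by
  have hμ (d : ℕ) : |(μ d : ℝ)| = if Squarefree d then 1 else 0 := by
    exact_mod_cast ArithmeticFunction.abs_moebius
  calc |∑ d ∈ D, (μ d : ℝ) * f d|
      ≤ ∑ d ∈ D, |(μ d : ℝ) * f d| := abs_sum_le_sum_abs _ _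
    _ = ∑ d ∈ D with Squarefree d, |f d| := by
        simp only [abs_mul, hμ, ite_mul, one_mul, zero_mul, sum_filter]
    _ ≤ #{d ∈ D | Squarefree d} * B := by
        rw [← nsmul_eq_mul]
        exact sum_le_card_nsmul _ _ _ fun d hd => hf d (mem_filter.1 hd).1 (mem_filter.1 hd).2

theorem lt_of_mem_primeFactors_of_coprime_primorialReal {m p : ℕ} {x : ℝ}
    (hm : m.Coprime (primorialReal x)) (hp : p ∈ m.primeFactors) : x < p := by
  obtain ⟨hpp, hpm, -⟩ := Nat.mem_primeFactors.1 hp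
  by_contra! hpx
  have hp_dvd : p ∣ primorialReal x :=
    dvd_prod_of_mem _ (mem_filter.2 ⟨mem_range.2 (Nat.lt_succ_of_le (Nat.le_floor hpx)), hpp⟩)
  exact hpp.one_lt.ne' (Nat.Coprime.eq_one_of_dvd (hm.coprime_dvd_left hpm) hp_dvd)

theorem tuplePoly_ne_zero {n : ℕ} (hn : n ≠ 0) (H : Finset ℕ) : tuplePoly H n ≠ 0 :=
  prod_ne_zero_iff.2 fun _ _ => by omega

theorem tuplePoly_le_pow {H : Finset ℕ} {h : ℕ} (hH : ∀ a ∈ H, a ≤ h) (n : ℕ) :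
    tuplePoly H n ≤ (n + h) ^ #H :=
  prod_le_pow_card _ _ _ fun a ha => Nat.add_le_add_left (hH a ha) n

theorem abs_LambdaR_le {R : ℝ} (hR : 1 ≤ R) (n : ℕ) (H : Finset ℕ) (ℓ : ℕ) :
    |LambdaR R n H ℓ| ≤
      #{d ∈ (tuplePoly H n).divisors | Squarefree d} / (#H + ℓ).factorial *
        log R ^ (#H + ℓ) := by
  set D := (tuplePoly H n).divisors.filter fun d : ℕ => (d : ℝ) ≤ R
  have hterm : ∀ d ∈ D, Squarefree d → |log (R / d) ^ (#H + ℓ)| ≤ log R ^ (#H + ℓ) := by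
    intro d hd hsq
    have hd1 : (1 : ℝ) ≤ d := by exact_mod_cast Nat.one_le_iff_ne_zero.2 hsq.ne_zero
    have hlog_nonneg : 0 ≤ log (R / d) :=
      log_nonneg ((one_le_div (by linarith)).2 (mem_filter.1 hd).2)
    have hlog_le : log (R / d) ≤ log R :=
      log_le_log (by positivity) (div_le_self (by linarith) hd1)
    rw [abs_of_nonneg (by positivity)]
    exact pow_le_pow_left₀ hlog_nonneg hlog_le _
  have hsqf : #{d ∈ D | Squarefree d} ≤ #{d ∈ (tuplePoly H n).divisors | Squarefree d} :=
    card_le_card (filter_subset_filter _ (filter_subset _ _))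
  rw [LambdaR, abs_mul, abs_of_nonneg (by positivity), one_div_mul_eq_div, div_mul_eq_mul_div]
  have hlogR : 0 ≤ log R := log_nonneg hR
  gcongr
  exact (abs_sum_moebius_mul_le hterm).trans (by gcongr)

theorem LambdaR_pointwise_bound_general (k ℓ h N n : ℕ)
    (R δ : ℝ) (hR : 2 ≤ R) (hδ0 : 0 < δ)
    (H : Finset ℕ) (hH : H ⊆ Finset.Icc 1 h) (hcard : H.card = k)
    (hn1 : N < n) (hn2 : n ≤ 2*N) (hhN : h ≤ N)
    (hcop : Nat.Coprime (tuplePoly H n) (primorialReal (R ^ δ))) :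
    |LambdaR R n H ℓ|
      ≤ (2 : ℝ) ^ ((k : ℝ) * Real.log (3*N) / (δ * Real.log R)) / (k + ℓ).factorial *
          (Real.log R) ^ (k + ℓ) := by
  set P := tuplePoly H n
  have hP : P ≠ 0 := tuplePoly_ne_zero (by omega) H
  have hlogR : 0 < log R := log_pos (by linarith)
  have hP_le : (P : ℝ) ≤ (3 * N : ℝ) ^ k := by
    rw [← hcard]
    have hH_le : ∀ a ∈ H, a ≤ h := fun a ha => (mem_Icc.1 (hH ha)).2
    exact_mod_cast (tuplePoly_le_pow hH_le n).trans (Nat.pow_le_pow_left (by omega) _)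
  have hω : (#P.primeFactors : ℝ) ≤ k * log (3 * N) / (δ * log R) :=
    calc (#P.primeFactors : ℝ) ≤ log P / log (R ^ δ) :=
          Nat.card_primeFactors_le_log_div_log hP (one_lt_rpow (by linarith) hδ0)
            fun p hp => (lt_of_mem_primeFactors_of_coprime_primorialReal hcop hp).le
      _ ≤ log ((3 * N : ℝ) ^ k) / (δ * log R) := by
          rw [log_rpow (by linarith)]
          gcongr
      _ = k * log (3 * N) / (δ * log R) := by rw [log_pow]
  have hsqf :
      (#{d ∈ P.divisors | Squarefree d} : ℝ) ≤ 2 ^ (k * log (3 * N) / (δ * log R)) := by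
    rw [Nat.card_divisors_filter_squarefree hP, Nat.cast_pow, Nat.cast_ofNat, ← rpow_natCast]
    exact rpow_le_rpow_of_exponent_le one_le_two hω
  calc |LambdaR R n H ℓ|
      ≤ #{d ∈ P.divisors | Squarefree d} / (k + ℓ).factorial * log R ^ (k + ℓ) :=
        hcard ▸ abs_LambdaR_le (by linarith) n H ℓ
    _ ≤ _ := by gcongr

/-- **(3.9) of GPY IV.** If `H ⊆ [1,h]` is a `k`-element set, `N < n ≤ 2N`, `h ≤ N`, and all
prime factors of `P_H(n)` exceed `R^δ`, then
`|Λ_R(n;H,ℓ)| ≤ (2^{k log(3N)/(δ log R)}/(k+ℓ)!) (log R)^{k+ℓ}`. -/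
theorem LambdaR_pointwise_bound (k ℓ h N n : ℕ) (hk : 1 ≤ k) (hℓ : ℓ < k)
    (R δ : ℝ) (hR : 2 ≤ R) (hδ0 : 0 < δ) (hδ1 : δ < 1)
    (H : Finset ℕ) (hH : H ⊆ Finset.Icc 1 h) (hcard : H.card = k)
    (hn1 : N < n) (hn2 : n ≤ 2*N) (hhN : h ≤ N)
    (hcop : Nat.Coprime (tuplePoly H n) (primorialReal (R ^ δ))) :
    |LambdaR R n H ℓ|
      ≤ (2 : ℝ) ^ ((k : ℝ) * Real.log (3*N) / (δ * Real.log R)) / (k + ℓ).factorial *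
          (Real.log R) ^ (k + ℓ) :=
  LambdaR_pointwise_bound_general k ℓ h N n R δ hR hδ0 H hH hcard hn1 hn2 hhN hcop
end

section
/- Let k ≥ 1 and 0 ≤ r ≤ k+2 be integers and let H₀ be a finite set with |H₀| = k+r. Then the number of quadruples (h', h'', H₁, H₂), where h', h'' ∈ H₀ (not necessarily distinct) and H₁, H₂ are k-element subsets of H₀ satisfying {h'} ∪ {h''} ∪ H₁ ∪ H₂ = H₀, equals (k+r)!·(k⁴ + 3k³ + (3r+2)k² + 4rk + r²) / (r!²·(k+2−r)!); equivalently, counting H₁ and H₂ as ordered k-tuples of distinct elements, the count is D(k,r) = k!²·(k+r)!·(k⁴ + 3k³ + (3r+2)k² + 4rk + r²) / (r!²·(k+2−r)!). -/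
/-!
For fixed `h', h'', H₁`, the `H₂` completing the cover of `H₀` are the complements in `H₀` of
the `r`-subsets of `T = {h', h''} ∪ H₁`, so there are `C(|T|, r)` of them. As `(h', h'')` ranges
over `H₀ × H₀`, `|T|` equals `k`, `k + 1`, `k + 2` for `k²`, `r(2k + 1)`, `r(r - 1)` pairs
respectively, and the closed form follows by expressing `C(k, r)` and `C(k + 1, r)` through
`C(k + 2, r)`.
-/

open Finset

namespace Finset

variable {α : Type*} [DecidableEq α]

theorem card_filter_powersetCard_union_eq {s t : Finset α} {k : ℕ} (hts : t ⊆ s) (hk : k ≤ #s) :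
    #{u ∈ s.powersetCard k | t ∪ u = s} = (#t).choose (#s - k) := by
  rw [← card_powersetCard]
  refine card_bij' (fun u _ => s \ u) (fun v _ => s \ v) (fun u hu => ?_) (fun v hv => ?_)
    (fun u hu => ?_) (fun v hv => ?_)
  · simp only [mem_filter, mem_powersetCard] at hu ⊢
    refine ⟨fun x hx => ?_, by rw [card_sdiff_of_subset hu.1.1, hu.1.2]⟩
    grind
  · simp only [mem_filter, mem_powersetCard] at hv ⊢
    refine ⟨⟨sdiff_subset, by rw [card_sdiff_of_subset (hv.1.trans hts), hv.2]; omega⟩, ?_⟩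
    ext x
    grind
  · exact sdiff_sdiff_eq_self (mem_powersetCard.1 (mem_filter.1 hu).1).1
  · exact sdiff_sdiff_eq_self ((mem_powersetCard.1 hv).1.trans hts)

theorem sum_card_insert {M : Type*} [AddCommMonoid M] {s t : Finset α} (hts : t ⊆ s) (f : ℕ → M) :
    ∑ x ∈ s, f #(insert x t) = #t • f #t + (#s - #t) • f (#t + 1) := by
  rw [← sum_sdiff hts, add_comm, ← card_sdiff_of_subset hts]
  congr 1
  · rw [sum_congr rfl fun x hx => by rw [insert_eq_of_mem hx], sum_const]
  · rw [sum_congr rfl fun x hx => by rw [card_insert_of_notMem (mem_sdiff.1 hx).2], sum_const]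

theorem sum_sum_card_insert_insert {M : Type*} [AddCommMonoid M] {s t : Finset α} (hts : t ⊆ s)
    (f : ℕ → M) :
    ∑ x ∈ s, ∑ y ∈ s, f #(insert x (insert y t)) =
      #t • (#t • f #t + (#s - #t) • f (#t + 1)) +
        (#s - #t) • ((#t + 1) • f (#t + 1) + (#s - (#t + 1)) • f (#t + 2)) := by
  have hinner : ∀ x ∈ s, ∑ y ∈ s, f #(insert x (insert y t)) =
      #(insert x t) • f #(insert x t) + (#s - #(insert x t)) • f (#(insert x t) + 1) := by
    intro x hx
    simp_rw [insert_comm x]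
    exact sum_card_insert (insert_subset hx hts) f
  rw [sum_congr rfl hinner]
  exact sum_card_insert hts fun m => m • f m + (#s - m) • f (m + 1)

end Finset

theorem card_quadruples_eq {α : Type*} [DecidableEq α] (k r : ℕ) (H₀ : Finset α)
    (hcard : #H₀ = k + r) :
    #{x ∈ (H₀ ×ˢ H₀) ×ˢ (H₀.powersetCard k ×ˢ H₀.powersetCard k) |
        {x.1.1} ∪ {x.1.2} ∪ x.2.1 ∪ x.2.2 = H₀} =
      (k + r).choose k * (k * (k * k.choose r + r * (k + 1).choose r) +
        r * ((k + 1) * (k + 1).choose r + (r - 1) * (k + 2).choose r)) := by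
  have hfiber : ∀ x ∈ H₀, ∀ y ∈ H₀, ∀ H₁ ∈ H₀.powersetCard k,
      #{H₂ ∈ H₀.powersetCard k | {x} ∪ {y} ∪ H₁ ∪ H₂ = H₀} =
        (#(insert x (insert y H₁))).choose r := by
    intro x hx y hy H₁ hH₁
    rw [filter_congr (q := fun H₂ => insert x (insert y H₁) ∪ H₂ = H₀) fun H₂ _ => by
        rw [insert_eq x, insert_eq y, union_assoc {x}],
      card_filter_powersetCard_union_eq
        (insert_subset hx (insert_subset hy (mem_powersetCard.1 hH₁).1)) (by omega),
      hcard, Nat.add_sub_cancel_left]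
  have hinner : ∀ H₁ ∈ H₀.powersetCard k,
      ∑ x ∈ H₀, ∑ y ∈ H₀, (#(insert x (insert y H₁))).choose r = k * (k * k.choose r + r * (k + 1).choose r) +
        r * ((k + 1) * (k + 1).choose r + (r - 1) * (k + 2).choose r) := by
    intro H₁ hH₁
    rw [mem_powersetCard] at hH₁
    rw [sum_sum_card_insert_insert hH₁.1 fun m => m.choose r, hH₁.2, hcard]
    simp only [smul_eq_mul, Nat.add_sub_cancel_left, Nat.add_sub_add_left]
  calc _ = ∑ x ∈ H₀, ∑ y ∈ H₀, ∑ H₁ ∈ H₀.powersetCard k,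
        #{H₂ ∈ H₀.powersetCard k | {x} ∪ {y} ∪ H₁ ∪ H₂ = H₀} := by
        simp only [card_filter, sum_product]
    _ = ∑ H₁ ∈ H₀.powersetCard k, ∑ x ∈ H₀, ∑ y ∈ H₀, (#(insert x (insert y H₁))).choose r := by
        rw [sum_congr rfl fun x _ => sum_comm, sum_comm]
        exact sum_congr rfl fun H₁ hH₁ => sum_congr rfl fun x hx => sum_congr rfl fun y hy =>
          hfiber x hx y hy H₁ hH₁
    _ = _ := by rw [sum_congr rfl hinner, sum_const, card_powersetCard, hcard, smul_eq_mul]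

theorem Nat.cast_choose_mul_succ {K : Type*} [CommRing K] (n k : ℕ) :
    (n.choose k : K) * (n + 1) = (n + 1).choose k * (n + 1 - k) := by
  rcases le_or_gt k (n + 1) with hk | hk
  · have := congrArg (Nat.cast : ℕ → K) (Nat.choose_mul_succ_eq n k)
    push_cast [hk] at this
    exact this
  · rw [Nat.choose_eq_zero_of_lt (by omega), Nat.choose_eq_zero_of_lt hk]
    simp

open Nat in
theorem quadruple_count_formula (k r : ℕ) (hr : r ≤ k + 2) :
    (((k + r).choose k * (k * (k * k.choose r + r * (k + 1).choose r) +
        r * ((k + 1) * (k + 1).choose r + (r - 1) * (k + 2).choose r)) : ℕ) : ℚ) =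
      ((k+r)! : ℚ) * ((k:ℚ)^4 + 3*(k:ℚ)^3 + (3*(r:ℚ)+2)*(k:ℚ)^2 + 4*(r:ℚ)*(k:ℚ) + (r:ℚ)^2)
          / ((r ! : ℚ)^2 * ((k+2-r)! : ℚ)) := by
  set P : ℚ := (k:ℚ)^4 + 3*(k:ℚ)^3 + (3*(r:ℚ)+2)*(k:ℚ)^2 + 4*(r:ℚ)*(k:ℚ) + (r:ℚ)^2
  have h0 := Nat.cast_choose_mul_succ (K := ℚ) k r
  have h1 := Nat.cast_choose_mul_succ (K := ℚ) (k + 1) r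
  push_cast at h1
  have hB : (((k * (k * k.choose r + r * (k + 1).choose r) +
        r * ((k + 1) * (k + 1).choose r + (r - 1) * (k + 2).choose r)) : ℕ) : ℚ) *
        ((k + 1) * (k + 2)) = (k + 2).choose r * P := by
    rcases Nat.eq_zero_or_pos r with rfl | hr0
    · simp only [Nat.choose_zero_right, P]
      push_cast
      ring
    · push_cast [Nat.cast_sub hr0]
      linear_combination ((k:ℚ)^2*(k+2)) * h0 + ((k:ℚ)^2*(k+1-r) + r*(2*k+1)*(k+1)) * h1
  have hc : ((k + 2).choose r * r ! * (k + 2 - r)! : ℚ) = (k + 2)! := by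
    exact_mod_cast Nat.choose_mul_factorial_mul_factorial hr
  have hn : ((k + r).choose k * k ! * r ! : ℚ) = (k + r)! := by
    rw [mul_right_comm, add_comm k r]
    exact_mod_cast Nat.add_choose_mul_factorial_mul_factorial r k
  have hf : ((k + 2)! : ℚ) = (k + 2) * (k + 1) * k ! := by
    push_cast [Nat.factorial_succ]; ring
  rw [eq_div_iff (by positivity), Nat.cast_mul]
  refine mul_right_cancel₀ (b := ((k : ℚ) + 1) * (k + 2)) (by positivity) ?_
  linear_combination (((k + r).choose k : ℚ) * r ! ^ 2 * (k + 2 - r)!) * hB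
    + ((k + r).choose k * r ! * P) * hc + ((k + r).choose k * r ! * P) * hf
    + (P * (k + 1) * (k + 2)) * hn

theorem quadruple_count_general {α : Type*} [DecidableEq α] (k r : ℕ) (hr : r ≤ k + 2)
    (H₀ : Finset α) (hcard : H₀.card = k + r) :
    ((((H₀ ×ˢ H₀) ×ˢ (H₀.powersetCard k ×ˢ H₀.powersetCard k)).filter
        (fun x => {x.1.1} ∪ {x.1.2} ∪ x.2.1 ∪ x.2.2 = H₀)).card : ℚ)
      = ((k+r).factorial : ℚ) * ((k:ℚ)^4 + 3*(k:ℚ)^3 + (3*(r:ℚ)+2)*(k:ℚ)^2 + 4*(r:ℚ)*(k:ℚ) + (r:ℚ)^2)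
          / ((r.factorial : ℚ)^2 * ((k+2-r).factorial : ℚ))
    ∧ ((k.factorial : ℚ))^2 *
        ((((H₀ ×ˢ H₀) ×ˢ (H₀.powersetCard k ×ˢ H₀.powersetCard k)).filter
          (fun x => {x.1.1} ∪ {x.1.2} ∪ x.2.1 ∪ x.2.2 = H₀)).card : ℚ)
      = ((k.factorial : ℚ))^2 * ((k+r).factorial : ℚ) *
          ((k:ℚ)^4 + 3*(k:ℚ)^3 + (3*(r:ℚ)+2)*(k:ℚ)^2 + 4*(r:ℚ)*(k:ℚ) + (r:ℚ)^2)
          / ((r.factorial : ℚ)^2 * ((k+2-r).factorial : ℚ)) := by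
  rw [card_quadruples_eq k r H₀ hcard, quadruple_count_formula k r hr]
  exact ⟨rfl, by ring⟩

/-- **(3.14) of GPY IV.** For `1 ≤ k`, `0 ≤ r ≤ k+2`, and a finite set `H₀` with
`|H₀| = k+r`, the number of quadruples `(h', h'', H₁, H₂)` with `h', h'' ∈ H₀` (not
necessarily distinct) and `H₁, H₂` `k`-element subsets of `H₀` such that
`{h'} ∪ {h''} ∪ H₁ ∪ H₂ = H₀` equals
`(k+r)!(k⁴+3k³+(3r+2)k²+4rk+r²)/(r!²(k+2-r)!)`; equivalently, counting `H₁, H₂` as ordered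
`k`-tuples of distinct elements multiplies the count by `k!²`, giving `D(k,r)`. -/
theorem quadruple_count {α : Type*} [DecidableEq α] (k r : ℕ) (hk : 1 ≤ k) (hr : r ≤ k + 2)
    (H₀ : Finset α) (hcard : H₀.card = k + r) :
    ((((H₀ ×ˢ H₀) ×ˢ (H₀.powersetCard k ×ˢ H₀.powersetCard k)).filter
        (fun x => {x.1.1} ∪ {x.1.2} ∪ x.2.1 ∪ x.2.2 = H₀)).card : ℚ)
      = ((k+r).factorial : ℚ) * ((k:ℚ)^4 + 3*(k:ℚ)^3 + (3*(r:ℚ)+2)*(k:ℚ)^2 + 4*(r:ℚ)*(k:ℚ) + (r:ℚ)^2)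
          / ((r.factorial : ℚ)^2 * ((k+2-r).factorial : ℚ))
    ∧ ((k.factorial : ℚ))^2 *
        ((((H₀ ×ˢ H₀) ×ˢ (H₀.powersetCard k ×ˢ H₀.powersetCard k)).filter
          (fun x => {x.1.1} ∪ {x.1.2} ∪ x.2.1 ∪ x.2.2 = H₀)).card : ℚ)
      = ((k.factorial : ℚ))^2 * ((k+r).factorial : ℚ) *
          ((k:ℚ)^4 + 3*(k:ℚ)^3 + (3*(r:ℚ)+2)*(k:ℚ)^2 + 4*(r:ℚ)*(k:ℚ) + (r:ℚ)^2)
          / ((r.factorial : ℚ)^2 * ((k+2-r).factorial : ℚ)) :=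
  quadruple_count_general k r hr H₀ hcard
end

section
/- Let k ≥ 1 be an integer and define D(k,r) = k!²·(k+r)!·(k⁴ + 3k³ + (3r+2)k² + 4rk + r²) / (r!²·(k+2−r)!) for 0 ≤ r ≤ k+2. Then for every real u > 0, Σ_{r=0}^{k+2} (k+r)!·D(k,r)·u^{k+r} ≤ ((2k+2)!)²·u^k·(1+u)^{k+2}. -/
open Finset

/-- `D(k,r) = k!²(k+r)!(k⁴+3k³+(3r+2)k²+4rk+r²)/(r!²(k+2-r)!)`, as a real number. -/
noncomputable def Dkr (k r : ℕ) : ℝ :=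
  (k.factorial : ℝ)^2 * ((k+r).factorial : ℝ) *
      ((k:ℝ)^4 + 3*(k:ℝ)^3 + (3*(r:ℝ)+2)*(k:ℝ)^2 + 4*(r:ℝ)*(k:ℝ) + (r:ℝ)^2)
    / ((r.factorial : ℝ)^2 * ((k+2-r).factorial : ℝ))

/-!
Termwise, `(k+r)! D(k,r) ≤ ((2k+2)!)² C(k+2,r)`; the binomial theorem then sums the right-hand
sides to `((2k+2)!)² u^k (1+u)^{k+2}`. Writing `Q(k,r)` for the quartic factor of `D(k,r)`, the
termwise bound says `k!² W(r) ≤ ((2k+2)!)² (k+2)!` with `W(r) = (k+r)!² Q(k,r) / r!`. The weight `W`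
is nondecreasing in `r`: passing from `r` to `r+1` multiplies `(k+r)!²` by `(k+r+1)²` but `r!` only
by `r+1`, while `Q` grows; and at the top index `Q(k,k+2) = ((k+1)(k+2))²`, which gives equality.
-/

def dkrQuartic (k r : ℝ) : ℝ :=
  k^4 + 3*k^3 + (3*r+2)*k^2 + 4*r*k + r^2

lemma dkrQuartic_le_succ (k r : ℕ) : dkrQuartic k r ≤ dkrQuartic k (r + 1) := by
  unfold dkrQuartic
  nlinarith [sq_nonneg (k : ℝ), (Nat.cast_nonneg k : (0 : ℝ) ≤ k), (Nat.cast_nonneg r : (0 : ℝ) ≤ r)]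

lemma dkrQuartic_add_two (k : ℝ) : dkrQuartic k (k + 2) = ((k + 1) * (k + 2))^2 := by
  unfold dkrQuartic; ring

lemma dkrQuartic_nonneg (k r : ℕ) : 0 ≤ dkrQuartic k r := by
  unfold dkrQuartic; positivity

noncomputable def dkrWeight (k r : ℕ) : ℝ :=
  ((k + r).factorial : ℝ)^2 * dkrQuartic k r / r.factorial

lemma dkrWeight_monotone (k : ℕ) : Monotone (dkrWeight k) := by
  refine monotone_nat_of_le_succ fun r => ?_
  have hk : (0 : ℝ) ≤ k := Nat.cast_nonneg k
  have hr : (0 : ℝ) ≤ r := Nat.cast_nonneg r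
  have hgrowth : (r + 1 : ℝ) ≤ ((k : ℝ) + r + 1)^2 := by nlinarith
  have hfac : ((k + (r + 1)).factorial : ℝ) = (k + r + 1) * (k + r).factorial := by
    rw [← Nat.add_assoc, Nat.factorial_succ]; push_cast; ring
  have hstep : (r + 1) * dkrQuartic k r ≤ ((k : ℝ) + r + 1)^2 * dkrQuartic k (r + 1) :=
    mul_le_mul hgrowth (dkrQuartic_le_succ k r) (dkrQuartic_nonneg k r) (by positivity)
  unfold dkrWeight
  rw [hfac, Nat.factorial_succ, div_le_div_iff₀ (by positivity) (by positivity)]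
  push_cast
  calc ((k + r).factorial : ℝ)^2 * dkrQuartic k r * ((r + 1) * r.factorial)
      = ((k + r).factorial)^2 * r.factorial * ((r + 1) * dkrQuartic k r) := by ring
    _ ≤ ((k + r).factorial)^2 * r.factorial * (((k : ℝ) + r + 1)^2 * dkrQuartic k (r + 1)) := by
      gcongr
    _ = _ := by ring

lemma factorial_sq_mul_dkrWeight_add_two (k : ℕ) :
    (k.factorial : ℝ)^2 * dkrWeight k (k + 2) = ((2*k+2).factorial : ℝ)^2 * (k + 2).factorial := by
  have hk2 : ((k + 2).factorial : ℝ) = (k + 1) * (k + 2) * k.factorial := by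
    simp only [Nat.factorial_succ]; push_cast; ring
  unfold dkrWeight
  rw [show k + (k + 2) = 2*k+2 by ring]
  push_cast
  rw [dkrQuartic_add_two, hk2]
  field_simp

lemma factorial_mul_Dkr_eq (k r : ℕ) :
    ((k + r).factorial : ℝ) * Dkr k r
      = (k.factorial : ℝ)^2 * dkrWeight k r / (r.factorial * (k + 2 - r).factorial) := by
  unfold Dkr dkrWeight dkrQuartic
  field_simp

lemma factorial_mul_Dkr_le (k r : ℕ) (hr : r ≤ k + 2) :
    ((k + r).factorial : ℝ) * Dkr k r ≤ ((2*k+2).factorial : ℝ)^2 * (k + 2).choose r := by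
  rw [factorial_mul_Dkr_eq, Nat.cast_choose ℝ hr, mul_div_assoc', ← factorial_sq_mul_dkrWeight_add_two]
  gcongr
  exact dkrWeight_monotone k hr

lemma sum_choose_mul_pow_add {R : Type*} [CommSemiring R] (n k : ℕ) (u : R) :
    ∑ r ∈ range (n + 1), (n.choose r : R) * u ^ (k + r) = u ^ k * (1 + u) ^ n := by
  rw [add_comm 1 u, add_pow, mul_sum]
  refine sum_congr rfl fun r _ => ?_
  rw [one_pow, pow_add]; ring

theorem Dkr_sum_bound_general (k : ℕ) (u : ℝ) (hu : 0 < u) :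
    ∑ r ∈ Finset.range (k+3), ((k+r).factorial : ℝ) * Dkr k r * u ^ (k+r)
      ≤ ((2*k+2).factorial : ℝ)^2 * u ^ k * (1+u) ^ (k+2) := by
  calc ∑ r ∈ range (k+3), ((k+r).factorial : ℝ) * Dkr k r * u ^ (k+r)
      ≤ ∑ r ∈ range (k+3), ((2*k+2).factorial : ℝ)^2 * (((k+2).choose r : ℝ) * u ^ (k+r)) := by
        refine sum_le_sum fun r hr => ?_
        rw [← mul_assoc]
        exact mul_le_mul_of_nonneg_right
          (factorial_mul_Dkr_le k r (by simpa [Nat.lt_succ_iff] using hr)) (by positivity)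
    _ = ((2*k+2).factorial : ℝ)^2 * u ^ k * (1+u) ^ (k+2) := by
        rw [← mul_sum, sum_choose_mul_pow_add, mul_assoc]

/-- **(3.15) of GPY IV.** For `k ≥ 1` and `u > 0`,
`∑_{r=0}^{k+2} (k+r)! D(k,r) u^{k+r} ≤ ((2k+2)!)² u^k (1+u)^{k+2}`. -/
theorem Dkr_sum_bound (k : ℕ) (hk : 1 ≤ k) (u : ℝ) (hu : 0 < u) :
    ∑ r ∈ Finset.range (k+3), ((k+r).factorial : ℝ) * Dkr k r * u ^ (k+r)
      ≤ ((2*k+2).factorial : ℝ)^2 * u ^ k * (1+u) ^ (k+2) :=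
  Dkr_sum_bound_general k u hu
end
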